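/- arXiv:1801.07602 — 2 statements merged into one kernel-verified Lean document; each statement's English description precedes it below -/
import Mathlib

section
/- Let (X,⊲,⊳) be a biquandle and Y a nonempty set with a map * : Y×X→Y such that y↦y*a is a bijection of Y for each a∈X and (y*a)*(b⊳a) = (y*b)*(a⊲b) for all y∈Y, a,b∈X. Then there is a unique family of maps *^[n] : Y×X→Y (n∈ℤ) satisfying y*^[0]x = y, y*^[1]x = y*x, and y*^[i+j]x = (y*^[i]x)*^[j](x⊲^[i]x) for all i,j∈ℤ; moreover Y is an (X×ℤ)-set of the associated multiple conjugation biquandle X×ℤ via y*(x,n) = y*^[n]x. -/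
/-- A biquandle structure on a type `X`, with under-operation `bu` (`x ⊲ y`)
and over-operation `bo` (`x ⊳ y`). -/
structure IsBiquandle {X : Type u} (bu bo : X → X → X) : Prop where
  b1 : ∀ x, bu x x = bo x x
  b2u : ∀ a, Function.Bijective (fun x => bu x a)
  b2o : ∀ a, Function.Bijective (fun x => bo x a)
  b2s : Function.Bijective (fun p : X × X => (bo p.2 p.1, bu p.1 p.2))
  b3uu : ∀ x y z, bu (bu x y) (bu z y) = bu (bu x z) (bo y z)
  b3ou : ∀ x y z, bo (bu x y) (bu z y) = bu (bo x z) (bo y z)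
  b3oo : ∀ x y z, bo (bo x y) (bo z y) = bo (bo x z) (bu y z)

/-- The defining recurrences of the parallel biquandle operations
`pu n = ⊲^[n]`, `po n = ⊳^[n]`. -/
def IsParallelOps {X : Type u} (bu bo : X → X → X) (pu po : ℤ → X → X → X) : Prop :=
  (∀ a b, pu 0 a b = a) ∧ (∀ a b, pu 1 a b = bu a b) ∧
  (∀ i j a b, pu (i + j) a b = pu j (pu i a b) (pu i b b)) ∧
  (∀ a b, po 0 a b = a) ∧ (∀ a b, po 1 a b = bo a b) ∧
  (∀ i j a b, po (i + j) a b = po j (po i a b) (po i b b))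

/-- A `G`-family of biquandles on `X`: `fu g x y = x ⊲^g y`, `fo g x y = x ⊳^g y`. -/
structure IsGFamily (G : Type v) [Group G] {X : Type u} (fu fo : G → X → X → X) : Prop where
  ax1 : ∀ (g h : G) (x y z : X),
    fu h (fu g x y) (fo g z y) = fu (h⁻¹ * g * h) (fu h x z) (fu h y z)
  ax2 : ∀ (g h : G) (x y z : X),
    fu h (fo g x y) (fo g z y) = fo (h⁻¹ * g * h) (fu h x z) (fu h y z)
  ax3 : ∀ (g h : G) (x y z : X),
    fo h (fo g x y) (fo g z y) = fo (h⁻¹ * g * h) (fo h x z) (fu h y z)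
  ax4 : ∀ (g h : G) (x y : X), fu (g * h) x y = fu h (fu g x y) (fu g y y)
  ax5 : ∀ x y : X, fu 1 x y = x
  ax6 : ∀ (g h : G) (x y : X), fo (g * h) x y = fo h (fo g x y) (fo g y y)
  ax7 : ∀ x y : X, fo 1 x y = x
  ax8 : ∀ (g : G) (x : X), fu g x x = fo g x x

/-- A multiple conjugation biquandle structure on the disjoint union `Σ l, G l`
of the groups `G l`, with operations `und` (`⊲`) and `ovr` (`⊳`). -/
structure IsMCB {Λ : Type u} (G : Λ → Type v) [∀ l, Group (G l)]
    (und ovr : (Σ l, G l) → (Σ l, G l) → (Σ l, G l)) : Prop where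
  ex_uu : ∀ x y z, und (und x y) (und z y) = und (und x z) (ovr y z)
  ex_ou : ∀ x y z, ovr (und x y) (und z y) = und (ovr x z) (ovr y z)
  ex_oo : ∀ x y z, ovr (ovr x y) (ovr z y) = ovr (ovr x z) (und y z)
  hom_und : ∀ (l : Λ) (x : Σ l, G l),
    ∃ (m : Λ) (f : G l →* G m), ∀ a : G l, und ⟨l, a⟩ x = ⟨m, f a⟩
  hom_ovr : ∀ (l : Λ) (x : Σ l, G l),
    ∃ (m : Λ) (f : G l →* G m), ∀ a : G l, ovr ⟨l, a⟩ x = ⟨m, f a⟩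
  und_mul : ∀ (l : Λ) (a b : G l) (x : Σ l, G l),
    und x ⟨l, a * b⟩ = und (und x ⟨l, a⟩) (ovr ⟨l, b⟩ ⟨l, a⟩)
  und_one : ∀ (l : Λ) (x : Σ l, G l), und x ⟨l, 1⟩ = x
  ovr_mul : ∀ (l : Λ) (a b : G l) (x : Σ l, G l),
    ovr x ⟨l, a * b⟩ = ovr (ovr x ⟨l, a⟩) (ovr ⟨l, b⟩ ⟨l, a⟩)
  ovr_one : ∀ (l : Λ) (x : Σ l, G l), ovr x ⟨l, 1⟩ = x
  conj : ∀ (l : Λ) (a b : G l), ovr ⟨l, a⁻¹ * b⟩ ⟨l, a⟩ = und ⟨l, b * a⁻¹⟩ ⟨l, a⟩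

/-- An `X`-set structure `act` (`*`) on `Y` for a multiple conjugation biquandle. -/
structure IsMCBAction {Λ : Type u} (G : Λ → Type v) [∀ l, Group (G l)]
    (und ovr : (Σ l, G l) → (Σ l, G l) → (Σ l, G l))
    {Y : Type w} (act : Y → (Σ l, G l) → Y) : Prop where
  act_one : ∀ (y : Y) (l : Λ), act y ⟨l, 1⟩ = y
  act_mul : ∀ (y : Y) (l : Λ) (a b : G l),
    act y ⟨l, a * b⟩ = act (act y ⟨l, a⟩) (ovr ⟨l, b⟩ ⟨l, a⟩)
  act_ex : ∀ (y : Y) (a b : Σ l, G l),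
    act (act y a) (ovr b a) = act (act y b) (und a b)










/-- The defining recurrences of the parallel action `pact n = *^[n]`. -/
def IsParallelAct {X : Type u} {Y : Type w} (bact : Y → X → Y)
    (pu : ℤ → X → X → X) (pact : ℤ → Y → X → Y) : Prop :=
  (∀ y x, pact 0 y x = y) ∧ (∀ y x, pact 1 y x = bact y x) ∧
  (∀ (i j : ℤ) (y : Y) (x : X), pact (i + j) y x = pact j (pact i y x) (pu i x x))


/-! All the ℤ-indexed families here are discrete flows (`f (i + j) = f j ∘ f i`), and a map
intertwining the generators of two flows intertwines the whole flows. Hence a flow is determined by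
its value at `1`. This gives `x ⊲^[n] x = x ⊳^[n] x` (both diagonals are generated by
`x ⊲ x = x ⊳ x`) and the uniqueness of `*^[n]`, because `(x, y) ↦ (x ⊲^[n] x, y *^[n] x)` is the
flow on `X × Y` generated by the bijection `(x, y) ↦ (x ⊲ x, y * x)`, whose powers give existence.

For the exchange law, `A m (y, x, z) = (y *^[m] x, x ⊲^[m] x, z ⊳^[m] x)` and
`B n (y, x, z) = (y *^[n] z, x ⊲^[n] z, z ⊲^[n] z)` are flows on `Y × X × X` whose generators
commute by the exchange axiom of `Y` and (B3). So `A m` and `B n` commute, and the first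
coordinate of `A m ∘ B n = B n ∘ A m` is the exchange law of `*^[·]`. -/

structure IsIntFlow {α : Type*} (f : ℤ → α → α) : Prop where
  zero : f 0 = id
  add : ∀ i j, f (i + j) = f j ∘ f i

namespace IsIntFlow

variable {α β : Type*} {f : ℤ → α → α} {g : ℤ → β → β}

theorem neg_one_comp_one (hf : IsIntFlow f) : f (-1) ∘ f 1 = id := by
  rw [← hf.add, add_neg_cancel, hf.zero]

theorem one_comp_neg_one (hf : IsIntFlow f) : f 1 ∘ f (-1) = id := by
  rw [← hf.add, neg_add_cancel, hf.zero]

theorem semiconj (hf : IsIntFlow f) (hg : IsIntFlow g) {p : α → β}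
    (h : Function.Semiconj p (f 1) (g 1)) (n : ℤ) : Function.Semiconj p (f n) (g n) := by
  have add : ∀ i j, Function.Semiconj p (f i) (g i) → Function.Semiconj p (f j) (g j) →
      Function.Semiconj p (f (i + j)) (g (i + j)) := by
    intro i j hi hj
    rw [hf.add, hg.add]
    exact hj.comp_right hi
  have neg : Function.Semiconj p (f (-1)) (g (-1)) :=
    h.inverses_right (congrFun hf.one_comp_neg_one) (congrFun hg.neg_one_comp_one)
  induction n using Int.induction_on with
  | zero => rw [hf.zero, hg.zero]; exact fun _ => rfl
  | succ k ih => exact add k 1 ih h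
  | pred k ih => exact add (-k) (-1) ih neg

theorem eq_of_one_eq {f' : ℤ → α → α} (hf : IsIntFlow f) (hf' : IsIntFlow f') (h : f 1 = f' 1) :
    f = f' :=
  funext fun n => funext (hf.semiconj hf' (p := id) (congrFun h) n)

theorem commute {f' : ℤ → α → α} (hf : IsIntFlow f) (hf' : IsIntFlow f')
    (h : Function.Commute (f 1) (f' 1)) (m n : ℤ) : Function.Commute (f m) (f' n) :=
  Function.Commute.symm <| hf.semiconj hf (Function.Commute.symm <| hf'.semiconj hf' h n) m

def toPerm (hf : IsIntFlow f) : Equiv.Perm α where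
  toFun := f 1
  invFun := f (-1)
  left_inv := congrFun hf.neg_one_comp_one
  right_inv := congrFun hf.one_comp_neg_one

@[simp]
theorem coe_toPerm (hf : IsIntFlow f) : ⇑hf.toPerm = f 1 :=
  rfl

end IsIntFlow

theorem isIntFlow_zpow {α : Type*} (σ : Equiv.Perm α) : IsIntFlow fun n => ⇑(σ ^ n) where
  zero := by rw [zpow_zero, Equiv.Perm.coe_one]
  add i j := by rw [add_comm, zpow_add, Equiv.Perm.coe_mul]

structure IsParallelFamily {X : Type*} (p : ℤ → X → X → X) : Prop where
  zero : ∀ a b, p 0 a b = a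
  add : ∀ i j a b, p (i + j) a b = p j (p i a b) (p i b b)

section Parallel

variable {X Y : Type*} {bu bo : X → X → X} {pu po : ℤ → X → X → X}
  {bact : Y → X → Y} {pact : ℤ → Y → X → Y}

theorem IsParallelOps.isParallelFamily_u (hp : IsParallelOps bu bo pu po) :
    IsParallelFamily pu :=
  ⟨hp.1, hp.2.2.1⟩

theorem IsParallelOps.isParallelFamily_o (hp : IsParallelOps bu bo pu po) :
    IsParallelFamily po :=
  ⟨hp.2.2.2.1, hp.2.2.2.2.2⟩

theorem IsParallelFamily.isIntFlow_diag {p : ℤ → X → X → X} (hp : IsParallelFamily p) :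
    IsIntFlow fun n x => p n x x where
  zero := funext fun x => hp.zero x x
  add i j := funext fun x => hp.add i j x x

theorem IsParallelOps.diag_eq (hbq : IsBiquandle bu bo) (hp : IsParallelOps bu bo pu po)
    (n : ℤ) (x : X) : po n x x = pu n x x := by
  have h : (fun n x => po n x x) = fun n x => pu n x x :=
    hp.isParallelFamily_o.isIntFlow_diag.eq_of_one_eq hp.isParallelFamily_u.isIntFlow_diag
      (funext fun x => by rw [hp.2.2.2.2.1, hp.2.1, hbq.b1])
  exact congrFun (congrFun h n) x

theorem IsParallelAct.isIntFlow_prod (hp : IsParallelFamily pu) (hq : IsParallelAct bact pu pact) :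
    IsIntFlow fun n (p : X × Y) => (pu n p.1 p.1, pact n p.2 p.1) where
  zero := funext fun p => by simp only [hp.zero, hq.1, id]
  add i j := funext fun p => by simp only [hp.add i j, hq.2.2 i j, Function.comp_apply]

theorem IsParallelFamily.existsUnique_isParallelAct (hp : IsParallelFamily pu)
    (hbij : ∀ a : X, Function.Bijective fun y => bact y a) :
    ∃! pact : ℤ → Y → X → Y, IsParallelAct bact pu pact := by
  let Φ : Equiv.Perm (X × Y) :=
    Equiv.prodShear hp.isIntFlow_diag.toPerm fun x => Equiv.ofBijective _ (hbij x)
  have fst_zpow (n : ℤ) (p : X × Y) : ((Φ ^ n) p).1 = pu n p.1 p.1 :=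
    (isIntFlow_zpow Φ).semiconj hp.isIntFlow_diag (p := Prod.fst) (fun p => by simp [Φ]) n p
  refine ⟨fun n y x => ((Φ ^ n) (x, y)).2, ⟨fun y x => ?_, fun y x => ?_, fun i j y x => ?_⟩,
    fun q hq => ?_⟩
  · simp
  · simp [Φ]
  · show ((Φ ^ (i + j)) (x, y)).2 = ((Φ ^ j) (pu i x x, ((Φ ^ i) (x, y)).2)).2
    rw [(isIntFlow_zpow Φ).add i j, Function.comp_apply, ← fst_zpow i (x, y)]
  · have hflow := (hq.isIntFlow_prod hp).eq_of_one_eq (isIntFlow_zpow Φ)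
      (funext fun p => by simp [Φ, hq.2.1])
    funext n y x
    exact congrArg Prod.snd (congrFun (congrFun hflow n) (x, y))

theorem IsParallelAct.exchange (hbq : IsBiquandle bu bo) (hp : IsParallelOps bu bo pu po)
    (hex : ∀ (y : Y) (a b : X), bact (bact y a) (bo b a) = bact (bact y b) (bu a b))
    (hq : IsParallelAct bact pu pact) (m n : ℤ) (y : Y) (x z : X) :
    pact n (pact m y x) (po m z x) = pact m (pact n y z) (pu n x z) := by
  have diag := hp.diag_eq hbq
  obtain ⟨hu0, hu1, huA, ho0, ho1, hoA⟩ := hp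
  obtain ⟨hq0, hq1, hqA⟩ := hq
  let A : ℤ → Y × X × X → Y × X × X := fun k p =>
    (pact k p.1 p.2.1, pu k p.2.1 p.2.1, po k p.2.2 p.2.1)
  let B : ℤ → Y × X × X → Y × X × X := fun k p =>
    (pact k p.1 p.2.2, pu k p.2.1 p.2.2, pu k p.2.2 p.2.2)
  have hA : IsIntFlow A :=
    ⟨funext fun p => by simp [A, hq0, hu0, ho0],
      fun i j => funext fun p => by simp [A, hqA i j, huA i j, hoA i j, diag]⟩
  have hB : IsIntFlow B :=
    ⟨funext fun p => by simp [B, hq0, hu0],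
      fun i j => funext fun p => by simp [B, hqA i j, huA i j]⟩
  have hAB : Function.Commute (A 1) (B 1) := fun ⟨w, u, v⟩ => by
    simp only [A, B, hq1, hu1, ho1, Prod.mk.injEq]
    exact ⟨(hex w u v).symm, hbq.b3uu u v u, hbq.b3ou v v u⟩
  exact (congrArg Prod.fst (hA.commute hB hAB m n (y, x, z))).symm

end Parallel

theorem stmt9_general {X : Type u} {Y : Type w}
    (bu bo : X → X → X) (hbq : IsBiquandle bu bo)
    (bact : Y → X → Y) (hbij : ∀ a : X, Function.Bijective (fun y => bact y a))
    (hex : ∀ (y : Y) (a b : X), bact (bact y a) (bo b a) = bact (bact y b) (bu a b))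
    (pu po : ℤ → X → X → X) (hp : IsParallelOps bu bo pu po) :
    (∃! pact : ℤ → Y → X → Y, IsParallelAct bact pu pact) ∧
    (∀ pact : ℤ → Y → X → Y, IsParallelAct bact pu pact →
      IsMCBAction (fun _ : X => Multiplicative ℤ)
        (fun p q => ⟨pu (Multiplicative.toAdd q.2) p.1 q.1, p.2⟩)
        (fun p q => ⟨po (Multiplicative.toAdd q.2) p.1 q.1, p.2⟩)
        (fun y p => pact (Multiplicative.toAdd p.2) y p.1)) := by
  refine ⟨hp.isParallelFamily_u.existsUnique_isParallelAct hbij, fun pact hq => ⟨?_, ?_, ?_⟩⟩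
  · exact hq.1
  · intro y x a b
    show pact (a.toAdd + b.toAdd) y x = pact b.toAdd (pact a.toAdd y x) (po a.toAdd x x)
    rw [hp.diag_eq hbq]
    exact hq.2.2 _ _ y x
  · rintro y ⟨x, m⟩ ⟨z, n⟩
    exact hq.exchange hbq hp hex m.toAdd n.toAdd y x z

/-- STATEMENT 9 -/
theorem stmt9 {X : Type u} {Y : Type w} [Nonempty X] [Nonempty Y]
    (bu bo : X → X → X) (hbq : IsBiquandle bu bo)
    (bact : Y → X → Y) (hbij : ∀ a : X, Function.Bijective (fun y => bact y a))
    (hex : ∀ (y : Y) (a b : X), bact (bact y a) (bo b a) = bact (bact y b) (bu a b))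
    (pu po : ℤ → X → X → X) (hp : IsParallelOps bu bo pu po) :
    (∃! pact : ℤ → Y → X → Y, IsParallelAct bact pu pact) ∧
    (∀ pact : ℤ → Y → X → Y, IsParallelAct bact pu pact →
      IsMCBAction (fun _ : X => Multiplicative ℤ)
        (fun p q => ⟨pu (Multiplicative.toAdd q.2) p.1 q.1, p.2⟩)
        (fun p q => ⟨po (Multiplicative.toAdd q.2) p.1 q.1, p.2⟩)
        (fun y p => pact (Multiplicative.toAdd p.2) y p.1)) :=
  stmt9_general bu bo hbq bact hbij hex pu po hp
end

section
/- Let X be a multiple conjugation biquandle and Y an X-set. For each block index i, let ∂^{(i)} denote the operator on generators of the prismatic chain groups given by ∂^{(i)}(⟨y⟩⟨𝐱₁⟩⋯⟨𝐱_k⟩) = ⟨y⟩⟨𝐱₁⟩⋯∂⟨𝐱_i⟩⋯⟨𝐱_k⟩ (i ≤ k). Then for i ≠ j, ∂^{(i)}∘∂^{(j)} = ∂^{(j)}∘∂^{(i)}; in particular the expression ⟨y⟩⟨𝐱₁⟩⋯∂⟨𝐱_i⟩⋯∂⟨𝐱_j⟩⋯⟨𝐱_k⟩ is well defined. -/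
structure MCB (Λ : Type u) (G : Λ → Type v) [∀ l, Group (G l)] where
  und : (Σ l, G l) → (Σ l, G l) → (Σ l, G l)
  ovr : (Σ l, G l) → (Σ l, G l) → (Σ l, G l)
  prop : IsMCB G und ovr

/-- A block `⟨x₁,…,x_m⟩`: a (possibly empty) tuple of elements of a single
group `G l`. -/
def PBlock (Λ : Type u) (G : Λ → Type v) : Type (max u v) :=
  Σ l : Λ, List (G l)

variable {Λ : Type u} {G : Λ → Type v} [∀ l, Group (G l)]

/-- Entrywise application of `⊲ a` to a block. -/
noncomputable def pBlockUnd (M : MCB Λ G) (a : Σ l, G l) (b : PBlock Λ G) : PBlock Λ G :=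
  ⟨(M.prop.hom_und b.1 a).choose, b.2.map (M.prop.hom_und b.1 a).choose_spec.choose⟩

/-- Entrywise application of `⊳ a` to a block. -/
noncomputable def pBlockOvr (M : MCB Λ G) (a : Σ l, G l) (b : PBlock Λ G) : PBlock Λ G :=
  ⟨(M.prop.hom_ovr b.1 a).choose, b.2.map (M.prop.hom_ovr b.1 a).choose_spec.choose⟩

/-- The operator `∂̃^{(i)}` applied at the `i`-th block (0-based) of a
generator: `⟨y⟩⟨𝐱₁⟩⋯∂̃⟨𝐱_i⟩⋯⟨𝐱_k⟩`. -/
noncomputable def dTildeAt (M : MCB Λ G) {Y : Type w} (act : Y → (Σ l, G l) → Y)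
    (i : ℕ) (g : Y × List (PBlock Λ G)) : FreeAbelianGroup (Y × List (PBlock Λ G)) :=
  if h : i < g.2.length then
    match g.2.get ⟨i, h⟩ with
    | ⟨_, []⟩ => 0
    | ⟨l, x :: rest⟩ =>
        FreeAbelianGroup.of
          (act g.1 ⟨l, x⟩,
           (g.2.take i).map (pBlockUnd M ⟨l, x⟩)
             ++ ⟨(M.prop.hom_ovr l ⟨l, x⟩).choose,
                  rest.map (fun z => (M.prop.hom_ovr l ⟨l, x⟩).choose_spec.choose (x⁻¹ * z))⟩
             :: (g.2.drop (i + 1)).map (pBlockOvr M ⟨l, x⟩))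
  else 0

/-- The operator `∂̂^{(i)}` applied at the `i`-th block (0-based) of a
generator: `⟨y⟩⟨𝐱₁⟩⋯∂̂⟨𝐱_i⟩⋯⟨𝐱_k⟩`. -/
noncomputable def dHatAt {Y : Type w} (i : ℕ) (g : Y × List (PBlock Λ G)) :
    FreeAbelianGroup (Y × List (PBlock Λ G)) :=
  if h : i < g.2.length then
    ∑ j : Fin (g.2.get ⟨i, h⟩).2.length,
      ((-1 : ℤ) ^ ((j : ℕ) + 1)) •
        FreeAbelianGroup.of
          (g.1, g.2.set i ⟨(g.2.get ⟨i, h⟩).1, (g.2.get ⟨i, h⟩).2.eraseIdx (j : ℕ)⟩)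
  else 0

/-- The operator `∂^{(i)} = ∂̃^{(i)} + ∂̂^{(i)}`. -/
noncomputable def dAt (M : MCB Λ G) {Y : Type w} (act : Y → (Σ l, G l) → Y)
    (i : ℕ) (g : Y × List (PBlock Λ G)) : FreeAbelianGroup (Y × List (PBlock Λ G)) :=
  dTildeAt M act i g + dHatAt i g

set_option linter.unusedSectionVars false

/-! Write a generator as `(y, L₁ ++ A :: L₂ ++ B :: L₃)`, with `A` and `B` the blocks at the two
positions `i < j`. `∂̂` only deletes entries of its own block, and the entrywise maps `⊲ a`, `⊳ a`
commute with deleting an entry, so `∂̂` commutes with everything acting at the other position. For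
the two `∂̃`'s, with `a` and `b` the first entries of `A` and `B`, comparing both orders block by
block gives exactly the three exchange laws of the biquandle (blocks left of `A` are hit by `⊲ b`
then `⊲ (a ⊲ b)`, or by `⊲ a` then `⊲ (b ⊳ a)`, and so on), and comparing the new `y` gives the
exchange law of the `X`-set. Blocks are compared through the list of their entries as elements of
`X`. If `j` is past the last block both composites vanish, because every operator preserves the
number of blocks. -/

open FreeAbelianGroup

theorem List.exists_append_cons_of_lt {α : Type*} {L : List α} {i : ℕ} (h : i < L.length) :
    ∃ L₁ B L₂, L = L₁ ++ B :: L₂ ∧ L₁.length = i :=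
  ⟨L.take i, L[i], L.drop (i + 1), by simp, by simp; omega⟩

theorem FreeAbelianGroup.lift_lift_comm {α : Type*} {F G : α → FreeAbelianGroup α}
    (h : ∀ x, lift F (G x) = lift G (F x)) (c : FreeAbelianGroup α) :
    lift F (lift G c) = lift G (lift F c) := by
  have : (lift F).comp (lift G) = (lift G).comp (lift F) :=
    FreeAbelianGroup.lift_ext _ _ fun x => by simpa using h x
  exact DFunLike.congr_fun this c

namespace PBlock

/-- An anonymous constructor at type `PBlock` elaborates to a term of the underlying `Sigma`
type, which `simp` and `rw` then fail to match; `mk` keeps the type `PBlock`. -/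
def mk (l : Λ) (K : List (G l)) : PBlock Λ G := ⟨l, K⟩

/-- The leading `1` records the label of the block even when the block is empty. -/
def entries (B : PBlock Λ G) : List (Σ l, G l) := (1 :: B.2).map (Sigma.mk B.1)

theorem entries_injective : Function.Injective (entries : PBlock Λ G → _) := by
  rintro ⟨l, K⟩ ⟨m, N⟩ h
  simp only [entries, List.map_cons, List.cons.injEq, Sigma.mk.inj_iff] at h
  obtain ⟨⟨rfl, -⟩, h⟩ := h
  rw [List.map_injective_iff.mpr sigma_mk_injective h]

theorem entries_mk_map {l m : Λ} (f : G l →* G m) {F : (Σ l, G l) → Σ l, G l}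
    (hF : ∀ c, F ⟨l, c⟩ = ⟨m, f c⟩) (K : List (G l)) :
    (mk m (K.map f)).entries = (mk l K).entries.map F := by
  show (1 :: K.map f).map (Sigma.mk m) = ((1 :: K).map (Sigma.mk l)).map F
  simp [Function.comp_def, hF]

theorem nil_or_cons (B : PBlock Λ G) : (∃ l, B = mk l []) ∨ ∃ l x r, B = mk l (x :: r) := by
  obtain ⟨l, _ | ⟨x, r⟩⟩ := B
  exacts [.inl ⟨l, rfl⟩, .inr ⟨l, x, r, rfl⟩]

theorem mk_map_inv_mul_map {l m : Λ} (f : G l →* G m) (x : G l) (r : List (G l)) :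
    mk m ((r.map f).map ((f x)⁻¹ * ·)) = mk m ((r.map (x⁻¹ * ·)).map f) := by
  simp [Function.comp_def]

def eraseIdx (B : PBlock Λ G) (q : ℕ) : PBlock Λ G := mk B.1 (B.2.eraseIdx q)

end PBlock

section BlockMaps

variable (M : MCB Λ G)

theorem entries_pBlockUnd (a : Σ l, G l) (B : PBlock Λ G) :
    (pBlockUnd M a B).entries = B.entries.map (M.und · a) :=
  PBlock.entries_mk_map _ (M.prop.hom_und B.1 a).choose_spec.choose_spec B.2

theorem entries_pBlockOvr (a : Σ l, G l) (B : PBlock Λ G) :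
    (pBlockOvr M a B).entries = B.entries.map (M.ovr · a) :=
  PBlock.entries_mk_map _ (M.prop.hom_ovr B.1 a).choose_spec.choose_spec B.2

theorem pBlockUnd_mk {a : Σ l, G l} {l m : Λ} {f : G l →* G m}
    (hf : ∀ c, M.und ⟨l, c⟩ a = ⟨m, f c⟩) (K : List (G l)) :
    pBlockUnd M a (PBlock.mk l K) = PBlock.mk m (K.map f) :=
  PBlock.entries_injective <| (entries_pBlockUnd M a _).trans (PBlock.entries_mk_map f hf K).symm

theorem pBlockOvr_mk {a : Σ l, G l} {l m : Λ} {f : G l →* G m}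
    (hf : ∀ c, M.ovr ⟨l, c⟩ a = ⟨m, f c⟩) (K : List (G l)) :
    pBlockOvr M a (PBlock.mk l K) = PBlock.mk m (K.map f) :=
  PBlock.entries_injective <| (entries_pBlockOvr M a _).trans (PBlock.entries_mk_map f hf K).symm

theorem pBlockUnd_und_pBlockUnd (a b : Σ l, G l) (B : PBlock Λ G) :
    pBlockUnd M (M.und a b) (pBlockUnd M b B) = pBlockUnd M (M.ovr b a) (pBlockUnd M a B) :=
  PBlock.entries_injective <| by
    simp only [entries_pBlockUnd, List.map_map]
    exact List.map_congr_left fun c _ => M.prop.ex_uu c b a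

theorem pBlockOvr_und_pBlockUnd (a b : Σ l, G l) (B : PBlock Λ G) :
    pBlockOvr M (M.und a b) (pBlockUnd M b B) = pBlockUnd M (M.ovr b a) (pBlockOvr M a B) :=
  PBlock.entries_injective <| by
    simp only [entries_pBlockUnd, entries_pBlockOvr, List.map_map]
    exact List.map_congr_left fun c _ => M.prop.ex_ou c b a

theorem pBlockOvr_und_pBlockOvr (a b : Σ l, G l) (B : PBlock Λ G) :
    pBlockOvr M (M.und a b) (pBlockOvr M b B) = pBlockOvr M (M.ovr b a) (pBlockOvr M a B) :=
  PBlock.entries_injective <| by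
    simp only [entries_pBlockOvr, List.map_map]
    exact List.map_congr_left fun c _ => (M.prop.ex_oo c a b).symm

theorem pBlockUnd_eraseIdx (a : Σ l, G l) (B : PBlock Λ G) (q : ℕ) :
    pBlockUnd M a (B.eraseIdx q) = (pBlockUnd M a B).eraseIdx q := by
  simp only [pBlockUnd, PBlock.eraseIdx, PBlock.mk, List.eraseIdx_map]
  rfl

theorem pBlockOvr_eraseIdx (a : Σ l, G l) (B : PBlock Λ G) (q : ℕ) :
    pBlockOvr M a (B.eraseIdx q) = (pBlockOvr M a B).eraseIdx q := by
  simp only [pBlockOvr, PBlock.eraseIdx, PBlock.mk, List.eraseIdx_map]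
  rfl

theorem length_pBlockUnd (a : Σ l, G l) (B : PBlock Λ G) :
    (pBlockUnd M a B).2.length = B.2.length := List.length_map _

theorem length_pBlockOvr (a : Σ l, G l) (B : PBlock Λ G) :
    (pBlockOvr M a B).2.length = B.2.length := List.length_map _

end BlockMaps

def lengthSpan (Y : Type w) (n : ℕ) :
    AddSubgroup (FreeAbelianGroup (Y × List (PBlock Λ G))) :=
  AddSubgroup.closure (of '' {g | g.2.length = n})

theorem lift_eq_zero_of_mem_lengthSpan {Y A : Type*} [AddCommGroup A]
    {F : Y × List (PBlock Λ G) → A} {n : ℕ}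
    (hF : ∀ g : Y × List (PBlock Λ G), g.2.length = n → F g = 0)
    {c : FreeAbelianGroup (Y × List (PBlock Λ G))} (hc : c ∈ lengthSpan Y n) :
    lift F c = 0 := by
  refine (AddSubgroup.closure_le (K := (lift F).ker)).mpr ?_ hc
  rintro _ ⟨g, hg, rfl⟩
  simp [hF g hg]

theorem of_mem_lengthSpan {Y : Type w} {n : ℕ} {g : Y × List (PBlock Λ G)}
    (hg : g.2.length = n) :
    of g ∈ lengthSpan Y n :=
  AddSubgroup.subset_closure ⟨g, hg, rfl⟩

section Operators

variable (M : MCB Λ G) {Y : Type w} (act : Y → (Σ l, G l) → Y)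

theorem dTildeAt_append_cons {i : ℕ} {L₁ : List (PBlock Λ G)} (hi : L₁.length = i) (y : Y)
    {l : Λ} (x : G l) (r : List (G l)) (L₂ : List (PBlock Λ G)) :
    dTildeAt M act i (y, L₁ ++ PBlock.mk l (x :: r) :: L₂) =
      of (act y ⟨l, x⟩, L₁.map (pBlockUnd M ⟨l, x⟩) ++
        pBlockOvr M ⟨l, x⟩ (PBlock.mk l (r.map (x⁻¹ * ·))) ::
          L₂.map (pBlockOvr M ⟨l, x⟩)) := by
  subst hi
  have hget : (L₁ ++ PBlock.mk l (x :: r) :: L₂).get ⟨L₁.length, by simp⟩ =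
      PBlock.mk l (x :: r) := by simp
  rw [dTildeAt, dif_pos (by simp), hget]
  have htake : ∀ A, (L₁ ++ A :: L₂).take L₁.length = L₁ := fun A => by simp
  have hdrop : ∀ A, (L₁ ++ A :: L₂).drop (L₁.length + 1) = L₂ := fun A => by simp
  simp only [htake, hdrop]
  dsimp only [PBlock.mk]
  simp only [pBlockOvr, List.map_map]
  rfl

theorem dTildeAt_append_nil {i : ℕ} {L₁ : List (PBlock Λ G)} (hi : L₁.length = i) (y : Y)
    (l : Λ) (L₂ : List (PBlock Λ G)) :
    dTildeAt M act i (y, L₁ ++ PBlock.mk l [] :: L₂) = 0 := by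
  subst hi
  have hget : (L₁ ++ PBlock.mk l [] :: L₂).get ⟨L₁.length, by simp⟩ = PBlock.mk l [] := by
    simp
  rw [dTildeAt, dif_pos (by simp), hget]
  rfl

theorem dHatAt_append_cons {i : ℕ} {L₁ : List (PBlock Λ G)} (hi : L₁.length = i) (y : Y)
    (B : PBlock Λ G) (L₂ : List (PBlock Λ G)) :
    dHatAt i (y, L₁ ++ B :: L₂) =
      ∑ q ∈ Finset.range B.2.length,
        (-1 : ℤ) ^ (q + 1) • of (y, L₁ ++ B.eraseIdx q :: L₂) := by
  subst hi
  rw [dHatAt, dif_pos (by simp)]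
  refine (Fin.sum_univ_eq_sum_range (fun q => (-1 : ℤ) ^ (q + 1) •
    of (y, (L₁ ++ B :: L₂).set L₁.length ((L₁ ++ B :: L₂)[L₁.length].eraseIdx q))) _).trans
    ?_
  have hB : (L₁ ++ B :: L₂)[L₁.length] = B := by simp
  simp only [List.get_eq_getElem, hB, List.set_append_right _ _ le_rfl, Nat.sub_self,
    List.set_cons_zero]
  rw [hB]

theorem lift_dHatAt_append_cons {A : Type*} [AddCommGroup A] (F : Y × List (PBlock Λ G) → A)
    {i : ℕ} {L₁ : List (PBlock Λ G)} (hi : L₁.length = i) (y : Y) (B : PBlock Λ G)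
    (L₂ : List (PBlock Λ G)) :
    lift F (dHatAt i (y, L₁ ++ B :: L₂)) =
      ∑ q ∈ Finset.range B.2.length,
        (-1 : ℤ) ^ (q + 1) • F (y, L₁ ++ B.eraseIdx q :: L₂) := by
  simp [dHatAt_append_cons hi, map_sum, map_zsmul]

theorem dAt_of_length_le {i : ℕ} (y : Y) {L : List (PBlock Λ G)} (h : L.length ≤ i) :
    dAt M act i (y, L) = 0 := by
  simp [dAt, dTildeAt, dHatAt, h.not_gt]

theorem lift_dAt (i : ℕ) (c : FreeAbelianGroup (Y × List (PBlock Λ G))) :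
    lift (dAt M act i) c = lift (dTildeAt M act i) c + lift (dHatAt i) c :=
  lift_add_apply _ _ c

theorem dAt_mem_lengthSpan (i : ℕ) (y : Y) (L : List (PBlock Λ G)) :
    dAt M act i (y, L) ∈ lengthSpan Y L.length := by
  rcases lt_or_ge i L.length with hi | hi
  · obtain ⟨L₁, B, L₂, rfl, rfl⟩ := List.exists_append_cons_of_lt hi
    refine add_mem ?_ ?_
    · rcases B.nil_or_cons with ⟨l, rfl⟩ | ⟨l, x, r, rfl⟩
      · rw [dTildeAt_append_nil M act rfl]
        exact zero_mem _
      · rw [dTildeAt_append_cons M act rfl]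
        exact of_mem_lengthSpan (by simp)
    · rw [dHatAt_append_cons rfl]
      exact sum_mem fun q _ => zsmul_mem (of_mem_lengthSpan (by simp [PBlock.eraseIdx])) _
  · rw [dAt_of_length_le M act y hi]
    exact zero_mem _

theorem lift_dTildeAt_comm_of_cons (hact : IsMCBAction G M.und M.ovr act) (y : Y)
    (L₁ L₂ L₃ : List (PBlock Λ G)) {l m : Λ} (x : G l) (r : List (G l)) (w : G m)
    (s : List (G m)) :
    lift (dTildeAt M act L₁.length) (dTildeAt M act (L₁ ++ PBlock.mk l (x :: r) :: L₂).length
      (y, L₁ ++ PBlock.mk l (x :: r) :: L₂ ++ PBlock.mk m (w :: s) :: L₃)) =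
    lift (dTildeAt M act (L₁ ++ PBlock.mk l (x :: r) :: L₂).length) (dTildeAt M act L₁.length
      (y, L₁ ++ PBlock.mk l (x :: r) :: L₂ ++ PBlock.mk m (w :: s) :: L₃)) := by
  -- `⟨l', fU x⟩ = a ⊲ b` and `⟨m', fO w⟩ = b ⊳ a` are the heads of `A`, `B` after the first
  -- face map.
  obtain ⟨l', fU, hU⟩ := M.prop.hom_und l ⟨m, w⟩
  obtain ⟨m', fO, hO⟩ := M.prop.hom_ovr m ⟨l, x⟩
  conv_lhs =>
    rw [dTildeAt_append_cons M act rfl, lift_apply_of, List.map_append, List.map_cons,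
      pBlockUnd_mk M hU, List.map_cons, List.append_assoc, List.cons_append,
      dTildeAt_append_cons M act (List.length_map _), PBlock.mk_map_inv_mul_map,
      ← pBlockUnd_mk M hU, ← hU]
  conv_rhs =>
    rw [List.append_assoc, List.cons_append, dTildeAt_append_cons M act rfl, lift_apply_of,
      List.map_append, List.map_cons, pBlockOvr_mk M hO, List.map_cons, ← List.cons_append,
      ← List.append_assoc, dTildeAt_append_cons M act (by simp), PBlock.mk_map_inv_mul_map,
      ← pBlockOvr_mk M hO, ← hO, hact.act_ex]
  simp only [List.map_append, List.map_cons, List.map_map, Function.comp_def, List.append_assoc,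
    List.cons_append, pBlockUnd_und_pBlockUnd, pBlockOvr_und_pBlockUnd, pBlockOvr_und_pBlockOvr]

theorem lift_dTildeAt_comm (hact : IsMCBAction G M.und M.ovr act) (y : Y)
    (L₁ L₂ L₃ : List (PBlock Λ G)) (A B : PBlock Λ G) :
    lift (dTildeAt M act L₁.length)
      (dTildeAt M act (L₁ ++ A :: L₂).length (y, L₁ ++ A :: L₂ ++ B :: L₃)) =
    lift (dTildeAt M act (L₁ ++ A :: L₂).length)
      (dTildeAt M act L₁.length (y, L₁ ++ A :: L₂ ++ B :: L₃)) := by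
  rcases A.nil_or_cons with ⟨l, rfl⟩ | ⟨l, x, r, rfl⟩ <;>
    rcases B.nil_or_cons with ⟨m, rfl⟩ | ⟨m, w, s, rfl⟩
  · rw [dTildeAt_append_nil M act rfl, List.append_assoc, List.cons_append,
      dTildeAt_append_nil M act rfl, map_zero, map_zero]
  · obtain ⟨l', fU, hU⟩ := M.prop.hom_und l ⟨m, w⟩
    rw [dTildeAt_append_cons M act rfl, lift_apply_of, List.map_append, List.map_cons,
      pBlockUnd_mk M hU, List.map_nil, List.append_assoc, List.cons_append,
      dTildeAt_append_nil M act (List.length_map _), List.append_assoc, List.cons_append,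
      dTildeAt_append_nil M act rfl, map_zero]
  · obtain ⟨m', fO, hO⟩ := M.prop.hom_ovr m ⟨l, x⟩
    rw [dTildeAt_append_nil M act rfl, map_zero, List.append_assoc, List.cons_append,
      dTildeAt_append_cons M act rfl, lift_apply_of, List.map_append, List.map_cons,
      pBlockOvr_mk M hO, List.map_nil, ← List.cons_append, ← List.append_assoc,
      dTildeAt_append_nil M act (by simp)]
  · exact lift_dTildeAt_comm_of_cons M act hact y L₁ L₂ L₃ x r w s

theorem lift_dTildeAt_dHatAt_comm (y : Y) (L₁ L₂ L₃ : List (PBlock Λ G))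
    (A B : PBlock Λ G) :
    lift (dTildeAt M act L₁.length)
      (dHatAt (L₁ ++ A :: L₂).length (y, L₁ ++ A :: L₂ ++ B :: L₃)) =
    lift (dHatAt (L₁ ++ A :: L₂).length)
      (dTildeAt M act L₁.length (y, L₁ ++ A :: L₂ ++ B :: L₃)) := by
  rw [lift_dHatAt_append_cons _ rfl]
  simp only [List.append_assoc, List.cons_append]
  rcases A.nil_or_cons with ⟨l, rfl⟩ | ⟨l, x, r, rfl⟩
  · simp [dTildeAt_append_nil M act rfl]
  · rw [dTildeAt_append_cons M act rfl, lift_apply_of, List.map_append, List.map_cons,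
      ← List.cons_append, ← List.append_assoc, dHatAt_append_cons (by simp), length_pBlockOvr]
    simp [dTildeAt_append_cons M act rfl, pBlockOvr_eraseIdx]

theorem lift_dHatAt_dTildeAt_comm (y : Y) (L₁ L₂ L₃ : List (PBlock Λ G))
    (A B : PBlock Λ G) :
    lift (dHatAt L₁.length)
      (dTildeAt M act (L₁ ++ A :: L₂).length (y, L₁ ++ A :: L₂ ++ B :: L₃)) =
    lift (dTildeAt M act (L₁ ++ A :: L₂).length)
      (dHatAt L₁.length (y, L₁ ++ A :: L₂ ++ B :: L₃)) := by
  rcases B.nil_or_cons with ⟨m, rfl⟩ | ⟨m, w, s, rfl⟩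
  · rw [dTildeAt_append_nil M act rfl, map_zero, List.append_assoc, List.cons_append,
      lift_dHatAt_append_cons _ rfl]
    simp only [← List.cons_append, ← List.append_assoc]
    simp only [List.length_append, List.length_cons, dTildeAt_append_nil M act, smul_zero,
      Finset.sum_const_zero]
  · rw [dTildeAt_append_cons M act rfl, lift_apply_of, List.map_append, List.map_cons,
      List.append_assoc, List.cons_append, dHatAt_append_cons (List.length_map _),
      List.append_assoc, List.cons_append, lift_dHatAt_append_cons _ rfl, length_pBlockUnd]
    simp only [← List.cons_append, ← List.append_assoc]
    simp only [List.length_append, List.length_cons, dTildeAt_append_cons M act]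
    simp [pBlockUnd_eraseIdx]

theorem lift_dHatAt_comm (y : Y) (L₁ L₂ L₃ : List (PBlock Λ G)) (A B : PBlock Λ G) :
    lift (dHatAt (Y := Y) L₁.length)
      (dHatAt (L₁ ++ A :: L₂).length (y, L₁ ++ A :: L₂ ++ B :: L₃)) =
    lift (dHatAt (L₁ ++ A :: L₂).length)
      (dHatAt L₁.length (y, L₁ ++ A :: L₂ ++ B :: L₃)) := by
  rw [lift_dHatAt_append_cons _ rfl]
  simp only [List.append_assoc, List.cons_append]
  have hB (q : ℕ) : dHatAt L₁.length (y, L₁ ++ A :: L₂ ++ B.eraseIdx q :: L₃) =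
      ∑ p ∈ Finset.range A.2.length,
        (-1 : ℤ) ^ (p + 1) • of (y, L₁ ++ A.eraseIdx p :: L₂ ++ B.eraseIdx q :: L₃) := by
    simp only [List.append_assoc, List.cons_append]
    exact dHatAt_append_cons rfl _ _ _
  have hA (p : ℕ) :
      dHatAt (L₁ ++ A :: L₂).length (y, L₁ ++ A.eraseIdx p :: L₂ ++ B :: L₃) =
      ∑ q ∈ Finset.range B.2.length,
        (-1 : ℤ) ^ (q + 1) • of (y, L₁ ++ A.eraseIdx p :: L₂ ++ B.eraseIdx q :: L₃) :=
    dHatAt_append_cons (by simp) _ _ _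
  rw [lift_dHatAt_append_cons _ rfl]
  simp only [← List.cons_append, ← List.append_assoc, hA, hB, Finset.smul_sum]
  exact Finset.sum_comm.trans (Finset.sum_congr rfl fun _ _ =>
    Finset.sum_congr rfl fun _ _ => smul_comm _ _ _)

theorem lift_dAt_comm_of_lt_length (hact : IsMCBAction G M.und M.ovr act) {i j : ℕ}
    (hij : i < j) (y : Y) {L : List (PBlock Λ G)} (hj : j < L.length) :
    lift (dAt M act i) (dAt M act j (y, L)) = lift (dAt M act j) (dAt M act i (y, L)) := by
  obtain ⟨P, B, L₃, rfl, rfl⟩ := List.exists_append_cons_of_lt hj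
  obtain ⟨L₁, A, L₂, rfl, rfl⟩ := List.exists_append_cons_of_lt hij
  simp only [lift_dAt, dAt, map_add, lift_dTildeAt_comm M act hact, lift_dTildeAt_dHatAt_comm,
    lift_dHatAt_dTildeAt_comm, lift_dHatAt_comm]
  abel

theorem lift_dAt_comm (hact : IsMCBAction G M.und M.ovr act) {i j : ℕ} (hij : i < j)
    (g : Y × List (PBlock Λ G)) :
    lift (dAt M act i) (dAt M act j g) = lift (dAt M act j) (dAt M act i g) := by
  obtain ⟨y, L⟩ := g
  rcases lt_or_ge j L.length with hj | hj
  · exact lift_dAt_comm_of_lt_length M act hact hij y hj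
  · rw [dAt_of_length_le M act y hj, map_zero, eq_comm]
    exact lift_eq_zero_of_mem_lengthSpan (fun g hg => dAt_of_length_le M act g.1 (hg ▸ hj))
      (dAt_mem_lengthSpan M act i y L)

end Operators

theorem stmt10_general (M : MCB Λ G) {Y : Type w} (act : Y → (Σ l, G l) → Y)
    (hact : IsMCBAction G M.und M.ovr act) :
    ∀ i j : ℕ, i ≠ j →
      ∀ c : FreeAbelianGroup (Y × List (PBlock Λ G)),
        FreeAbelianGroup.lift (dAt M act i) (FreeAbelianGroup.lift (dAt M act j) c)
          = FreeAbelianGroup.lift (dAt M act j) (FreeAbelianGroup.lift (dAt M act i) c) := by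
  intro i j hij
  rcases hij.lt_or_gt with hij | hji
  · exact FreeAbelianGroup.lift_lift_comm (lift_dAt_comm M act hact hij)
  · exact fun c => (FreeAbelianGroup.lift_lift_comm (lift_dAt_comm M act hact hji) c).symm

/-- STATEMENT 10 -/
theorem stmt10 (M : MCB Λ G) {Y : Type w} [Nonempty Y] (act : Y → (Σ l, G l) → Y)
    (hact : IsMCBAction G M.und M.ovr act) :
    ∀ i j : ℕ, i ≠ j →
      ∀ c : FreeAbelianGroup (Y × List (PBlock Λ G)),
        FreeAbelianGroup.lift (dAt M act i) (FreeAbelianGroup.lift (dAt M act j) c)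
          = FreeAbelianGroup.lift (dAt M act j) (FreeAbelianGroup.lift (dAt M act i) c) :=
  stmt10_general M act hact
end
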